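/- Let ε ∈ (0,1), and let A and B be disjoint finite sets of items, each item i carrying a positive integer time interval T_i and a positive integer ordering quantity H_i. Suppose that lcm{T_i : i ∈ A} ≤ ε·min{T_i : i ∈ B}. Then OPT^disc(I_{A∪B}) ≥ OPT^disc(I_A) + (1 − 2ε)·OPT^disc(I_B), where I_S denotes the discrete inventory staggering instance consisting of the items of S. -/

import Mathlib

/-!
Fix shifts for `A ∪ B` and a time `t` at which the `B`-items peak. Within less than
`lcm{T_i : i ∈ A} ≤ ε·min{T_j : j ∈ B}` steps after `t` the `A`-items are at their own peak
again (their total level is periodic with that period), while meanwhile every `B`-item `j`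
loses at most `ε·H_j`. Hence the joint peak is at least `I_max(A) + I_max(B) − ε·H_Σ(B)`.
Finally `H_Σ(B)/2 ≤ OPT^disc(B)`: over a cycle each item's level averages at least `H_j/2`,
since the levels at `t` and at the reflected time `2τ_j − 1 − t` add up to `H_j·(1 + 1/T_j)`.
-/

noncomputable def invLevel (T H : ℕ) (τ t : ℤ) : ℝ :=
  (H : ℝ) * (1 - (((t - τ) % (T : ℤ) : ℤ) : ℝ) / (T : ℝ))

noncomputable def totalInv {ι : Type*} [Fintype ι] (T H : ι → ℕ) (τ : ι → ℤ) (t : ℤ) : ℝ :=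
  ∑ i, invLevel (T i) (H i) (τ i) t

def cycleLen {ι : Type*} [Fintype ι] (T : ι → ℕ) : ℕ := Finset.univ.lcm T

noncomputable def Imax {ι : Type*} [Fintype ι] (T H : ι → ℕ) (τ : ι → ℤ) : ℝ :=
  sSup (totalInv T H τ '' Set.Ico (0 : ℤ) (cycleLen T : ℤ))

noncomputable def OPTdisc {ι : Type*} [Fintype ι] (T H : ι → ℕ) : ℝ :=
  sInf (Set.range (Imax T H))

open Function

lemma Function.Periodic.apply_emod {M : Type*} {f : ℤ → M} {n : ℤ} (hf : Periodic f n)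
    (x : ℤ) : f (x % n) = f x := by
  rw [Int.emod_def, mul_comm]
  simpa using hf.sub_int_mul_eq (x / n)

lemma Function.Periodic.sum_Ico_sub {M : Type*} [AddCommMonoid M] {f : ℤ → M} {n : ℤ}
    (hf : Periodic f n) (c : ℤ) :
    ∑ t ∈ Finset.Ico 0 n, f (c - t) = ∑ t ∈ Finset.Ico 0 n, f t := by
  rcases le_or_gt n 0 with hn | hn
  · simp [Finset.Ico_eq_empty_of_le hn]
  have hmem : ∀ x, x % n ∈ Finset.Ico 0 n := fun x =>
    Finset.mem_Ico.2 ⟨Int.emod_nonneg x hn.ne', Int.emod_lt_of_pos x hn⟩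
  have hinv : ∀ t ∈ Finset.Ico 0 n, (c - (c - t) % n) % n = t := by
    intro t ht
    rw [Int.sub_emod, Int.emod_emod_of_dvd _ dvd_rfl, ← Int.sub_emod, sub_sub_cancel]
    exact Int.emod_eq_of_lt (Finset.mem_Ico.1 ht).1 (Finset.mem_Ico.1 ht).2
  exact Finset.sum_nbij' (fun t => (c - t) % n) (fun t => (c - t) % n)
    (fun t _ => hmem _) (fun t _ => hmem _) hinv hinv fun t _ => (hf.apply_emod _).symm

lemma invLevel_periodic_of_dvd {T n : ℕ} (H : ℕ) (τ : ℤ) (h : T ∣ n) :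
    Periodic (invLevel T H τ) n := by
  obtain ⟨k, rfl⟩ := h
  have hT : Periodic (invLevel T H τ) T := fun t => by
    simp only [invLevel, add_sub_right_comm, Int.add_emod_right]
  simpa [mul_comm] using hT.nat_mul k

lemma invLevel_nonneg {T : ℕ} (H : ℕ) (hT : 0 < T) (τ t : ℤ) : 0 ≤ invLevel T H τ t := by
  have hr : (((t - τ) % T : ℤ) : ℝ) < T := by exact_mod_cast Int.emod_lt_of_pos _ (by omega)
  have : (((t - τ) % T : ℤ) : ℝ) / T ≤ 1 := (div_le_one (by positivity)).2 hr.le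
  exact mul_nonneg (Nat.cast_nonneg _) (by linarith)

lemma invLevel_add_invLevel_reflect {T : ℕ} (H : ℕ) (hT : 0 < T) (τ t : ℤ) :
    invLevel T H τ t + invLevel T H τ (2 * τ - 1 - t) = H * (1 + 1 / T) := by
  have hT' : (0 : ℤ) < T := by exact_mod_cast hT
  have h0 := Int.emod_nonneg (t - τ) hT'.ne'
  have hlt := Int.emod_lt_of_pos (t - τ) hT'
  have hrefl : (2 * τ - 1 - t - τ) % T = T - 1 - (t - τ) % T := by
    rw [show 2 * τ - 1 - t - τ = (T - 1 - (t - τ) % T) + T * (-((t - τ) / T) - 1) by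
      linear_combination Int.emod_def (t - τ) T, Int.add_mul_emod_self_left]
    exact Int.emod_eq_of_lt (by omega) (by omega)
  unfold invLevel
  rw [hrefl]
  push_cast
  field_simp
  ring

lemma sum_Ico_invLevel_ge {T Λ : ℕ} (H : ℕ) (hT : 0 < T) (hTΛ : T ∣ Λ) (τ : ℤ) :
    (Λ : ℝ) * H / 2 ≤ ∑ t ∈ Finset.Ico (0 : ℤ) Λ, invLevel T H τ t := by
  have hpair := Finset.sum_congr rfl fun t (_ : t ∈ Finset.Ico (0 : ℤ) Λ) =>
    invLevel_add_invLevel_reflect H hT τ t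
  rw [Finset.sum_add_distrib, (invLevel_periodic_of_dvd H τ hTΛ).sum_Ico_sub, Finset.sum_const,
    Int.card_Ico, sub_zero, Int.toNat_natCast, nsmul_eq_mul] at hpair
  have hH : (H : ℝ) ≤ H * (1 + 1 / T) :=
    le_mul_of_one_le_right (Nat.cast_nonneg _) (by simp only [le_add_iff_nonneg_right]; positivity)
  nlinarith [mul_le_mul_of_nonneg_left hH (Nat.cast_nonneg (α := ℝ) Λ)]

lemma invLevel_sub_le {T : ℕ} (H : ℕ) (hT : 0 < T) (τ t : ℤ) {d : ℤ} (hd : 0 ≤ d) :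
    invLevel T H τ t - H * d / T ≤ invLevel T H τ (t + d) := by
  have hT' : (0 : ℤ) < T := by exact_mod_cast hT
  have hle : (t + d - τ) % T ≤ (t - τ) % T + d := by
    have hx : 0 ≤ (t - τ) % T + d := add_nonneg (Int.emod_nonneg _ hT'.ne') hd
    rw [add_sub_right_comm, ← Int.emod_add_emod, Int.emod_def ((t - τ) % T + d)]
    nlinarith [Int.ediv_nonneg hx hT'.le]
  have hle' : (((t + d - τ) % T : ℤ) : ℝ) ≤ (((t - τ) % T : ℤ) : ℝ) + d := by exact_mod_cast hle
  unfold invLevel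
  have : (H : ℝ) * (1 - ((((t - τ) % T : ℤ) : ℝ) + d) / T)
      ≤ H * (1 - (((t + d - τ) % T : ℤ) : ℝ) / T) := by gcongr
  linarith [show (H : ℝ) * (1 - ((((t - τ) % T : ℤ) : ℝ) + d) / T)
      = H * (1 - (((t - τ) % T : ℤ) : ℝ) / T) - H * d / T by ring]

section

variable {ι : Type*} [Fintype ι] {T H : ι → ℕ}

lemma dvd_cycleLen (i : ι) : T i ∣ cycleLen T := Finset.dvd_lcm (Finset.mem_univ i)

lemma cycleLen_pos (hT : ∀ i, 0 < T i) : 0 < cycleLen T := by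
  rw [Nat.pos_iff_ne_zero, cycleLen, Ne, Finset.lcm_eq_zero_iff]
  rintro ⟨i, -, hi⟩
  exact (hT i).ne' hi

lemma totalInv_periodic (τ : ι → ℤ) : Periodic (totalInv T H τ) (cycleLen T) := fun t =>
  Finset.sum_congr rfl fun i _ => invLevel_periodic_of_dvd (H i) (τ i) (dvd_cycleLen i) t

lemma totalInv_sum_elim {ι' : Type*} [Fintype ι'] {T' H' : ι' → ℕ} (τ : ι → ℤ) (τ' : ι' → ℤ)
    (t : ℤ) : totalInv (Sum.elim T T') (Sum.elim H H') (Sum.elim τ τ') t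
      = totalInv T H τ t + totalInv T' H' τ' t :=
  Fintype.sum_sum_type _

lemma totalInv_le_Imax (hT : ∀ i, 0 < T i) (τ : ι → ℤ) (t : ℤ) :
    totalInv T H τ t ≤ Imax T H τ := by
  have hΛ : (0 : ℤ) < cycleLen T := by exact_mod_cast cycleLen_pos hT
  rw [← (totalInv_periodic τ).apply_emod]
  exact le_csSup ((Set.finite_Ico _ _).image _).bddAbove
    ⟨_, ⟨Int.emod_nonneg t hΛ.ne', Int.emod_lt_of_pos t hΛ⟩, rfl⟩

lemma exists_totalInv_eq_Imax (hT : ∀ i, 0 < T i) (τ : ι → ℤ) :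
    ∃ t, totalInv T H τ t = Imax T H τ := by
  have hΛ : (0 : ℤ) < cycleLen T := by exact_mod_cast cycleLen_pos hT
  obtain ⟨t, -, ht⟩ := (Set.nonempty_Ico.2 hΛ).image (totalInv T H τ) |>.csSup_mem
    ((Set.finite_Ico _ _).image _)
  exact ⟨t, ht⟩

lemma OPTdisc_le_Imax (hT : ∀ i, 0 < T i) (τ : ι → ℤ) : OPTdisc T H ≤ Imax T H τ :=
  csInf_le ⟨0, Set.forall_mem_range.2 fun τ' =>
    (totalInv_le_Imax hT τ' 0).trans' (Finset.sum_nonneg fun i _ => invLevel_nonneg _ (hT i) _ _)⟩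
    ⟨τ, rfl⟩

lemma le_OPTdisc {a : ℝ} (h : ∀ τ, a ≤ Imax T H τ) : a ≤ OPTdisc T H :=
  le_csInf (Set.range_nonempty _) (Set.forall_mem_range.2 h)

lemma sum_div_two_le_Imax (hT : ∀ i, 0 < T i) (τ : ι → ℤ) :
    (∑ i, (H i : ℝ)) / 2 ≤ Imax T H τ := by
  set Λ := cycleLen T
  have hΛ : (0 : ℝ) < Λ := by exact_mod_cast cycleLen_pos hT
  have hlow : (Λ : ℝ) * (∑ i, (H i : ℝ)) / 2 ≤ ∑ t ∈ Finset.Ico (0 : ℤ) Λ, totalInv T H τ t := by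
    simp only [totalInv]
    rw [Finset.sum_comm, Finset.mul_sum, Finset.sum_div]
    exact Finset.sum_le_sum fun i _ => sum_Ico_invLevel_ge (H i) (hT i) (dvd_cycleLen i) (τ i)
  have hup : ∑ t ∈ Finset.Ico (0 : ℤ) Λ, totalInv T H τ t ≤ Λ * Imax T H τ := by
    simpa using Finset.sum_le_sum fun t (_ : t ∈ Finset.Ico (0 : ℤ) Λ) => totalInv_le_Imax (H := H) hT τ t
  refine le_of_mul_le_mul_left ?_ hΛ
  rw [← mul_div_assoc]
  exact hlow.trans hup

end

lemma Imax_add_Imax_sub_le_Imax_sum_elim {ιA ιB : Type*} [Fintype ιA] [Fintype ιB]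
    {TA HA : ιA → ℕ} {TB HB : ιB → ℕ} (hTA : ∀ i, 0 < TA i) (hTB : ∀ j, 0 < TB j) {ε : ℝ}
    (hshort : ∀ j, (cycleLen TA : ℝ) ≤ ε * TB j) (τA : ιA → ℤ) (τB : ιB → ℤ) :
    Imax TA HA τA + Imax TB HB τB - ε * ∑ j, (HB j : ℝ)
      ≤ Imax (Sum.elim TA TB) (Sum.elim HA HB) (Sum.elim τA τB) := by
  obtain ⟨tA, htA⟩ := exists_totalInv_eq_Imax (H := HA) hTA τA
  obtain ⟨tB, htB⟩ := exists_totalInv_eq_Imax (H := HB) hTB τB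
  have hΛ : (0 : ℤ) < cycleLen TA := by exact_mod_cast cycleLen_pos hTA
  set d := (tA - tB) % cycleLen TA
  have hd0 : 0 ≤ d := Int.emod_nonneg _ hΛ.ne'
  have hdΛ : (d : ℝ) ≤ cycleLen TA := by exact_mod_cast (Int.emod_lt_of_pos _ hΛ).le
  have hA : totalInv TA HA τA (tB + d) = Imax TA HA τA := by
    rw [← htA, ← (totalInv_periodic τA).apply_emod, Int.add_emod_emod, add_sub_cancel,
      (totalInv_periodic τA).apply_emod]
  have hB : Imax TB HB τB - ε * ∑ j, (HB j : ℝ) ≤ totalInv TB HB τB (tB + d) := by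
    rw [← htB, totalInv, Finset.mul_sum, ← Finset.sum_sub_distrib]
    refine Finset.sum_le_sum fun j _ => le_trans ?_ (invLevel_sub_le (HB j) (hTB j) _ tB hd0)
    have hTj : (0 : ℝ) < TB j := by exact_mod_cast hTB j
    have hloss : (HB j : ℝ) * d / TB j ≤ ε * HB j := by
      rw [div_le_iff₀ hTj]
      nlinarith [mul_le_mul_of_nonneg_left (hdΛ.trans (hshort j)) (Nat.cast_nonneg (α := ℝ) (HB j))]
    linarith
  have := totalInv_le_Imax (T := Sum.elim TA TB) (H := Sum.elim HA HB) (by rintro (i | j); exacts [hTA i, hTB j]) (Sum.elim τA τB) (tB + d)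
  rw [totalInv_sum_elim, hA] at this
  linarith

theorem stmt16_general {ιA ιB : Type} [Fintype ιA] [Fintype ιB]
    (TA HA : ιA → ℕ) (TB HB : ιB → ℕ)
    (hTA : ∀ i, 0 < TA i)
    (hTB : ∀ i, 0 < TB i)
    (ε : ℝ) (hε : ε ∈ Set.Ioo (0 : ℝ) 1)
    (hshort : ∀ j : ιB, ((Finset.univ.lcm TA : ℕ) : ℝ) ≤ ε * (TB j : ℝ)) :
    OPTdisc TA HA + (1 - 2 * ε) * OPTdisc TB HB
      ≤ OPTdisc (Sum.elim TA TB) (Sum.elim HA HB) := by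
  have hOPTB : (∑ j, (HB j : ℝ)) / 2 ≤ OPTdisc TB HB :=
    le_OPTdisc fun τ => sum_div_two_le_Imax hTB τ
  have hloss : ε * ∑ j, (HB j : ℝ) ≤ 2 * ε * OPTdisc TB HB := by nlinarith [hε.1]
  refine le_OPTdisc fun τ => ?_
  rw [← Sum.elim_comp_inl_inr τ]
  have hjoint := Imax_add_Imax_sub_le_Imax_sum_elim (HA := HA) (HB := HB) hTA hTB hshort
    (τ ∘ Sum.inl) (τ ∘ Sum.inr)
  have hA := OPTdisc_le_Imax (H := HA) hTA (τ ∘ Sum.inl)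
  have hB := OPTdisc_le_Imax (H := HB) hTB (τ ∘ Sum.inr)
  linarith

/-- Near-additivity under ε-shortness: if `lcm{T_i : i ∈ A} ≤ ε·min{T_i : i ∈ B}`
for disjoint item sets `A` and `B`, then
`OPT^disc(I_{A∪B}) ≥ OPT^disc(I_A) + (1−2ε)·OPT^disc(I_B)`. -/
theorem stmt16 {ιA ιB : Type} [Fintype ιA] [Fintype ιB] [Nonempty ιB]
    (TA HA : ιA → ℕ) (TB HB : ιB → ℕ)
    (hTA : ∀ i, 0 < TA i) (hHA : ∀ i, 0 < HA i)
    (hTB : ∀ i, 0 < TB i) (hHB : ∀ i, 0 < HB i)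
    (ε : ℝ) (hε : ε ∈ Set.Ioo (0 : ℝ) 1)
    (hshort : ∀ j : ιB, ((Finset.univ.lcm TA : ℕ) : ℝ) ≤ ε * (TB j : ℝ)) :
    OPTdisc TA HA + (1 - 2 * ε) * OPTdisc TB HB
      ≤ OPTdisc (Sum.elim TA TB) (Sum.elim HA HB) :=
  stmt16_general TA HA TB HB hTA hTB ε hε hshort
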